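/- Let f : ℝ^d → ℝ be strictly convex and continuously differentiable, and assume that the sublevel set D = {u ∈ ℝ^d : f(u) ≤ 1} is compact and that the minimum of f is strictly smaller than 1. Then the gradient ∇f(u) is nonzero at every point of the level set H = {u ∈ ℝ^d : f(u) = 1}, and the map u ↦ ∇f(u)/‖∇f(u)‖ is a homeomorphism from H onto the unit sphere S^{d−1} of ℝ^d. -/

import Mathlib

noncomputable section

open Set Metric Filter
open scoped RealInnerProductSpace Topology

namespace Stmt6Aux

variable {E : Type*} [NormedAddCommGroup E] [InnerProductSpace ℝ E] [CompleteSpace E]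

lemma line_strictConvexOn {f : E → ℝ} (hf : StrictConvexOn ℝ Set.univ f)
    {u w : E} (hw : w ≠ 0) : StrictConvexOn ℝ Set.univ (fun t : ℝ => f (u + t • w)) := by
  refine ⟨convex_univ, ?_⟩
  intro x _ y _ hxy a b ha hb hab
  have hxy' : u + x • w ≠ u + y • w := by
    simp only [ne_eq, add_right_inj]
    exact fun h => hxy (smul_left_injective ℝ hw h)
  have key : u + (a • x + b • y) • w = a • (u + x • w) + b • (u + y • w) := by
    simp only [smul_eq_mul, smul_add, add_add_add_comm, smul_smul]
    rw [← add_smul, hab, one_smul, ← add_smul]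
  show f (u + (a • x + b • y) • w) < a • f (u + x • w) + b • f (u + y • w)
  rw [key]
  exact hf.2 trivial trivial hxy' ha hb hab

lemma line_hasDerivAt {f : E → ℝ} (hf : ContDiff ℝ 1 f) (u w : E) (t : ℝ) :
    HasDerivAt (fun s : ℝ => f (u + s • w)) ⟪gradient f (u + t • w), w⟫ t := by
  have hdf : DifferentiableAt ℝ f (u + t • w) :=
    (hf.differentiable one_ne_zero).differentiableAt
  have hg := hdf.hasGradientAt
  have hline : HasDerivAt (fun s : ℝ => u + s • w) w t := by
    simpa using ((hasDerivAt_id t).smul_const w).const_add u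
  have := hg.hasFDerivAt.comp_hasDerivAt t hline
  exact this

/-- first-order strict inequality for strictly convex differentiable functions. -/
lemma grad_strict_ineq {f : E → ℝ} (hconv : StrictConvexOn ℝ Set.univ f)
    (hdiff : ContDiff ℝ 1 f) {u v : E} (huv : u ≠ v) :
    f u + ⟪gradient f u, v - u⟫ < f v := by
  have hw : v - u ≠ 0 := sub_ne_zero.2 (Ne.symm huv)
  have hsc := line_strictConvexOn hconv (u := u) hw
  have hd := line_hasDerivAt hdiff u (v - u) 0
  rw [show u + (0 : ℝ) • (v - u) = u by simp] at hd
  have h01 : (0:ℝ) < 1 := one_pos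
  have hslope := hsc.lt_slope_of_hasDerivAt trivial trivial h01 hd
  rw [slope_def_field] at hslope
  simp only [zero_smul, add_zero, one_smul, add_sub_cancel, sub_zero, div_one] at hslope
  linarith [hslope]

lemma exists_lt_of_inner_grad_neg {f : E → ℝ} (hdiff : ContDiff ℝ 1 f) {u w : E}
    (h : ⟪gradient f u, w⟫ < 0) : ∃ t : ℝ, 0 < t ∧ f (u + t • w) < f u := by
  have hd := line_hasDerivAt hdiff u w 0
  rw [show u + (0 : ℝ) • w = u by simp] at hd
  have htend := hasDerivAt_iff_tendsto_slope.1 hd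
  have hev : ∀ᶠ t in 𝓝[≠] (0:ℝ), slope (fun s : ℝ => f (u + s • w)) 0 t < 0 :=
    htend (Iio_mem_nhds h)
  have hev' : ∀ᶠ t in 𝓝[>] (0:ℝ), slope (fun s : ℝ => f (u + s • w)) 0 t < 0 :=
    hev.filter_mono (nhdsWithin_mono 0 (fun t ht => ne_of_gt ht))
  obtain ⟨t, hts, ht⟩ := (hev'.and self_mem_nhdsWithin).exists
  refine ⟨t, ht, ?_⟩
  rw [slope_def_field] at hts
  have : (f (u + t • w) - f (u + (0:ℝ) • w)) / (t - 0) < 0 := by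
    simpa [div_eq_inv_mul] using hts
  rw [show u + (0:ℝ) • w = u by simp, sub_zero] at this
  have := (div_neg_iff.1 this)
  rcases this with ⟨h1, h2⟩ | ⟨h1, h2⟩
  · linarith
  · linarith

lemma eq_normalized {a n : E} (ha : a ≠ 0) (hn : ‖n‖ = 1)
    (H : ∀ w : E, ⟪a, w⟫ < 0 → ⟪n, w⟫ ≤ 0) : n = ‖a‖⁻¹ • a := by
  have ha2 : (0:ℝ) < ⟪a, a⟫ := by
    rw [real_inner_self_eq_norm_sq]
    have := norm_pos_iff.2 ha
    positivity
  have H' : ∀ w : E, ⟪a, w⟫ ≤ 0 → ⟪n, w⟫ ≤ 0 := by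
    intro w hw
    have key : ∀ ε : ℝ, 0 < ε → ⟪n, w⟫ ≤ ε * ⟪n, a⟫ := by
      intro ε hε
      have h1 : ⟪a, w - ε • a⟫ < 0 := by
        rw [inner_sub_right, real_inner_smul_right]
        nlinarith
      have h2 := H _ h1
      rw [inner_sub_right, real_inner_smul_right] at h2
      linarith
    rcases le_or_gt ⟪n, a⟫ 0 with h | h
    · have := key 1 one_pos; nlinarith
    · have : ∀ ε : ℝ, 0 < ε → ⟪n, w⟫ ≤ 0 + ε := by
        intro ε hε
        have := key (ε / ⟪n, a⟫) (div_pos hε h)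
        rw [div_mul_cancel₀ _ h.ne'] at this
        linarith
      exact le_of_forall_pos_le_add this
  set c : ℝ := ⟪a, n⟫ / ⟪a, a⟫ with hc
  have haw0 : ⟪a, n - c • a⟫ = 0 := by
    rw [inner_sub_right, real_inner_smul_right, hc]
    field_simp
    ring
  have hnw0 : ⟪n, n - c • a⟫ = 0 := by
    refine le_antisymm (H' _ haw0.le) ?_
    have h2 := H' (-(n - c • a)) (by rw [inner_neg_right, haw0]; simp)
    rw [inner_neg_right] at h2; linarith
  have hw00 : n - c • a = 0 := by
    rw [← inner_self_eq_zero (𝕜 := ℝ), inner_sub_left, real_inner_smul_left,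
      hnw0, haw0]
    ring
  have hkey : n = c • a := by rwa [sub_eq_zero] at hw00
  have hcnonneg : 0 ≤ c := by
    have h2 := H' (-a) (by rw [inner_neg_right]; linarith)
    rw [inner_neg_right] at h2
    have : 0 ≤ ⟪a, n⟫ := by rw [real_inner_comm]; linarith
    exact div_nonneg this ha2.le
  have hnorm : 1 = c * ‖a‖ := by
    rw [← hn, hkey, norm_smul, Real.norm_eq_abs, abs_of_nonneg hcnonneg]
  have hanorm : ‖a‖ ≠ 0 := norm_ne_zero_iff.2 ha
  have hcval : c = ‖a‖⁻¹ := by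
    field_simp at hnorm ⊢
    linarith
  rw [hkey, hcval]

end Stmt6Aux

open Stmt6Aux


/-- if `f : ℝ^d → ℝ` is strictly convex and continuously differentiable, with
compact sublevel set `D = {f ≤ 1}` and minimum strictly smaller than `1`, then `∇f` does not
vanish on the level set `H = {f = 1}` and `u ↦ ∇f(u)/‖∇f(u)‖` is a homeomorphism from `H`
onto the unit sphere `S^{d-1}`. -/
theorem stmt6 {d : ℕ} (f : EuclideanSpace ℝ (Fin d) → ℝ)
    (hconv : StrictConvexOn ℝ Set.univ f) (hdiff : ContDiff ℝ 1 f)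
    (hcpt : IsCompact {u : EuclideanSpace ℝ (Fin d) | f u ≤ 1})
    (hmin : ∃ u, f u < 1) :
    (∀ u : EuclideanSpace ℝ (Fin d), f u = 1 → gradient f u ≠ 0) ∧
    ∃ φ : {u : EuclideanSpace ℝ (Fin d) // f u = 1} ≃ₜ
        Metric.sphere (0 : EuclideanSpace ℝ (Fin d)) 1,
      ∀ u : {u : EuclideanSpace ℝ (Fin d) // f u = 1},
        (φ u : EuclideanSpace ℝ (Fin d)) = ‖gradient f u.1‖⁻¹ • gradient f u.1 := by
  obtain ⟨m, hm⟩ := hmin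
  -- gradient nonvanishing on H
  have hgne : ∀ u : EuclideanSpace ℝ (Fin d), f u = 1 → gradient f u ≠ 0 := by
    intro u hu hgrad
    have hum : u ≠ m := by intro h; rw [← h] at hm; linarith [hm, hu.ge]
    have := grad_strict_ineq hconv hdiff hum
    rw [hgrad, inner_zero_left, add_zero, hu] at this
    linarith
  refine ⟨hgne, ?_⟩
  -- continuity of the gradient
  have hgc : Continuous (gradient f) := by
    have : gradient f = fun x => (InnerProductSpace.toDual ℝ (EuclideanSpace ℝ (Fin d))).symm (fderiv ℝ f x) := rfl
    rw [this]
    exact (InnerProductSpace.toDual ℝ (EuclideanSpace ℝ (Fin d))).symm.continuous.comp (hdiff.continuous_fderiv one_ne_zero)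
  have hfc : Continuous f := hdiff.continuous
  -- H is compact
  have hHcl : IsClosed {u : EuclideanSpace ℝ (Fin d) | f u = 1} := isClosed_eq hfc continuous_const
  have hHcpt : IsCompact {u : EuclideanSpace ℝ (Fin d) | f u = 1} :=
    hcpt.of_isClosed_subset hHcl (fun u hu => le_of_eq hu)
  haveI : CompactSpace {u : EuclideanSpace ℝ (Fin d) // f u = 1} := isCompact_iff_compactSpace.mp hHcpt
  -- the map
  have hmem : ∀ u : {u : EuclideanSpace ℝ (Fin d) // f u = 1},
      ‖gradient f u.1‖⁻¹ • gradient f u.1 ∈ Metric.sphere (0 : EuclideanSpace ℝ (Fin d)) 1 := by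
    intro u
    have h := hgne u.1 u.2
    rw [mem_sphere_zero_iff_norm, norm_smul, norm_inv, norm_norm,
      inv_mul_cancel₀ (norm_ne_zero_iff.2 h)]
  set Φ : {u : EuclideanSpace ℝ (Fin d) // f u = 1} → Metric.sphere (0 : EuclideanSpace ℝ (Fin d)) 1 :=
    fun u => ⟨‖gradient f u.1‖⁻¹ • gradient f u.1, hmem u⟩ with hΦ
  have hΦc : Continuous Φ := by
    refine Continuous.subtype_mk ?_ _
    have h1 : Continuous fun u : {u : EuclideanSpace ℝ (Fin d) // f u = 1} => gradient f u.1 :=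
      hgc.comp continuous_subtype_val
    exact ((h1.norm.inv₀ (fun u => norm_ne_zero_iff.2 (hgne u.1 u.2))).smul h1)
  -- injectivity
  have hΦinj : Function.Injective Φ := by
    intro u v huv
    by_contra hne
    have hne' : u.1 ≠ v.1 := fun h => hne (Subtype.ext h)
    have h1 := grad_strict_ineq hconv hdiff hne'
    have h2 := grad_strict_ineq hconv hdiff hne'.symm
    rw [u.2, v.2] at h1
    rw [u.2, v.2] at h2
    have hval : ‖gradient f u.1‖⁻¹ • gradient f u.1
        = ‖gradient f v.1‖⁻¹ • gradient f v.1 := by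
      have := congrArg Subtype.val huv
      simpa [hΦ] using this
    have hnu : (0:ℝ) < ‖gradient f u.1‖ :=
      norm_pos_iff.2 (hgne u.1 u.2)
    have hnv : (0:ℝ) < ‖gradient f v.1‖ :=
      norm_pos_iff.2 (hgne v.1 v.2)
    -- gradient f u = ‖gradient f u‖ • n, similarly for v
    set n : EuclideanSpace ℝ (Fin d) := ‖gradient f u.1‖⁻¹ • gradient f u.1 with hn
    have hgu : gradient f u.1 = ‖gradient f u.1‖ • n := by
      rw [hn, smul_smul, mul_inv_cancel₀ hnu.ne', one_smul]
    have hgv : gradient f v.1 = ‖gradient f v.1‖ • n := by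
      rw [hval, smul_smul, mul_inv_cancel₀ hnv.ne', one_smul]
    rw [hgu, real_inner_smul_left] at h1
    rw [hgv, real_inner_smul_left] at h2
    have hnvu : ⟪n, v.1 - u.1⟫ < 0 := by nlinarith
    have hnuv : ⟪n, u.1 - v.1⟫ < 0 := by nlinarith
    rw [show u.1 - v.1 = -(v.1 - u.1) by abel, inner_neg_right] at hnuv
    linarith
  -- surjectivity
  have hΦsurj : Function.Surjective Φ := by
    rintro ⟨n, hn⟩
    rw [mem_sphere_zero_iff_norm] at hn
    -- maximize ⟪n, ·⟫ on D
    have hDne : {u : EuclideanSpace ℝ (Fin d) | f u ≤ 1}.Nonempty := ⟨m, hm.le⟩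
    obtain ⟨u₀, hu₀D, hmax⟩ := hcpt.exists_isMaxOn hDne
      ((continuous_const.inner continuous_id).continuousOn :
        ContinuousOn (fun v : EuclideanSpace ℝ (Fin d) => ⟪n, v⟫) _)
    have hinn : ⟪n, n⟫ = 1 := by
      rw [real_inner_self_eq_norm_sq, hn]; norm_num
    -- f u₀ = 1
    have hu₀ : f u₀ = 1 := by
      by_contra h
      have hlt : f u₀ < 1 := lt_of_le_of_ne hu₀D h
      have hcont : ContinuousAt (fun t : ℝ => f (u₀ + t • n)) 0 :=
        (hfc.comp (continuous_const.add (continuous_id.smul continuous_const))).continuousAt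
      have hev : ∀ᶠ t in 𝓝 (0:ℝ), f (u₀ + t • n) < 1 := by
        have : f (u₀ + (0:ℝ) • n) < 1 := by simpa using hlt
        exact hcont (Iio_mem_nhds this)
      have hev' : ∀ᶠ t in 𝓝[>] (0:ℝ), f (u₀ + t • n) < 1 :=
        hev.filter_mono nhdsWithin_le_nhds
      obtain ⟨t, htf, ht⟩ := (hev'.and self_mem_nhdsWithin).exists
      have hmem' : u₀ + t • n ∈ {u : EuclideanSpace ℝ (Fin d) | f u ≤ 1} := htf.le
      have h3 := hmax hmem'
      simp only [Set.mem_setOf_eq, id_eq, inner_add_right, real_inner_smul_right, hinn] at h3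
      nlinarith
    have hg := hgne u₀ hu₀
    -- key: supporting direction property
    have hkey : ∀ w : EuclideanSpace ℝ (Fin d), ⟪gradient f u₀, w⟫ < 0 → ⟪n, w⟫ ≤ 0 := by
      intro w hw
      obtain ⟨t, ht, htf⟩ := exists_lt_of_inner_grad_neg hdiff hw
      rw [hu₀] at htf
      have hmem' : u₀ + t • w ∈ {u : EuclideanSpace ℝ (Fin d) | f u ≤ 1} := htf.le
      have h3 := hmax hmem'
      simp only [Set.mem_setOf_eq, id_eq, inner_add_right, real_inner_smul_right] at h3
      nlinarith
    have := eq_normalized hg hn hkey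
    exact ⟨⟨u₀, hu₀⟩, Subtype.ext this.symm⟩
  refine ⟨Continuous.homeoOfEquivCompactToT2
    (f := Equiv.ofBijective Φ ⟨hΦinj, hΦsurj⟩) hΦc, fun u => rfl⟩
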